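/- arXiv:1808.00614 — 6 statements merged into one kernel-verified Lean document; each statement's English description precedes it below -/
import Mathlib

section
/- Let H be a complex Hilbert space and D a densely defined self-adjoint operator on H. Let n ≥ 1 be a natural number, x a bounded operator on H, and y : ℕ → B(H) a sequence of bounded operators with y 0 = x such that for every k < n: y k maps dom D into dom D, and for every h ∈ dom D, y (k+1) h = i·(D(y k h) − y k (D h)) (so x is n-times weakly D-differentiable with (δ^D_w)^k(x) = y k). If y n = 0, then y 1 = 0. That is, for every n ∈ ℕ, ker (δ^D_w)^n = ker δ^D_w (kernel stabilization). -/
/-!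
The Cayley transform `U = (D - i)(D + i)⁻¹` of `D` is unitary, `1 - U = 2i (D + i)⁻¹` is injective
with range `dom D`, and the weak derivative `δ = i[D, ·]` satisfies
`U y - y U = -½ (1 - U) δ(y) (1 - U)`. Hence conjugation by `U` maps
`g_k = (-½)^k (1 - U)^k δ^k(x) (1 - U)^k U⁻ᵏ` to `g_k + g_{k+1}`, and if `δ^n(x) = 0` then
`U^m x U⁻ᵐ = ∑_{k ≤ n} C(m, k) g_k` for every `m`. The left side has norm at most `‖x‖`, and a
bounded sequence of this polynomial shape has vanishing non-constant coefficients. So `g_1 = 0`,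
which forces `δ(x) = 0`.
-/

open Finset Complex
open scoped InnerProductSpace

theorem sum_range_succ_choose_succ_smul {M : Type*} [AddCommMonoid M] (b : ℕ → M) (n m : ℕ) :
    ∑ k ∈ range (n + 1), (m + 1).choose k • b k =
      ∑ k ∈ range (n + 1), m.choose k • b k + ∑ k ∈ range n, m.choose k • b (k + 1) := by
  rw [sum_range_succ', sum_range_succ' (fun k => m.choose k • b k)]
  simp only [Nat.choose_succ_succ', add_smul, sum_add_distrib, Nat.choose_zero_right]
  abel

theorem iterate_map_eq_sum_choose_smul {M : Type*} [AddCommMonoid M] (f : M →+ M) (g : ℕ → M)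
    {n : ℕ} (hf : ∀ k < n, f (g k) = g k + g (k + 1)) (hn : f (g n) = g n) (m : ℕ) :
    f^[m] (g 0) = ∑ k ∈ range (n + 1), m.choose k • g k := by
  induction m with
  | zero => simp [sum_range_succ']
  | succ m ih =>
    rw [Function.iterate_succ_apply', ih, sum_range_succ_choose_succ_smul, map_sum,
      sum_range_succ, map_nsmul, hn,
      sum_congr rfl fun k hk => by rw [map_nsmul, hf k (mem_range.1 hk)]]
    simp only [smul_add, sum_add_distrib, sum_range_succ]
    abel

theorem eq_zero_of_forall_norm_add_nsmul_le {E : Type*} [NormedAddCommGroup E] [NormedSpace ℝ E]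
    {a b : E} {C : ℝ} (h : ∀ m : ℕ, ‖a + m • b‖ ≤ C) : b = 0 := by
  by_contra hb
  obtain ⟨m, hm⟩ := exists_nat_gt ((C + ‖a‖) / ‖b‖)
  have : ‖m • b‖ ≤ C + ‖a‖ :=
    calc ‖m • b‖ = ‖(a + m • b) - a‖ := by rw [add_sub_cancel_left]
      _ ≤ ‖a + m • b‖ + ‖a‖ := norm_sub_le _ _
      _ ≤ C + ‖a‖ := by gcongr; exact h m
  rw [RCLike.norm_nsmul ℝ, nsmul_eq_mul] at this
  rw [div_lt_iff₀ (norm_pos_iff.2 hb)] at hm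
  linarith

theorem eq_zero_of_forall_norm_sum_choose_smul_le {E : Type*} [NormedAddCommGroup E]
    [NormedSpace ℝ E] {n : ℕ} {b : ℕ → E} {C : ℝ}
    (hb : ∀ m : ℕ, ‖∑ k ∈ range (n + 1), m.choose k • b k‖ ≤ C) {k : ℕ} (hk : 0 < k) (hkn : k ≤ n) :
    b k = 0 := by
  induction n generalizing b C k with
  | zero => omega
  | succ n ih =>
    -- The forward difference in `m` shifts the coefficients down by one.
    have hdiff : ∀ m : ℕ, ‖∑ k ∈ range (n + 1), m.choose k • b (k + 1)‖ ≤ C + C := fun m => by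
      rw [← add_sub_cancel_left (∑ k ∈ range (n + 2), m.choose k • b k)
        (∑ k ∈ range (n + 1), m.choose k • b (k + 1)), ← sum_range_succ_choose_succ_smul]
      exact (norm_sub_le _ _).trans (add_le_add (hb (m + 1)) (hb m))
    have hhigh : ∀ j, 1 ≤ j → j ≤ n → b (j + 1) = 0 := fun j hj hjn => ih hdiff hj hjn
    rcases k with _ | _ | j
    · omega
    · refine eq_zero_of_forall_norm_add_nsmul_le (a := b 0) (C := C) fun m => ?_
      convert hb m using 2
      rw [sum_range_succ', sum_range_succ', sum_eq_zero fun j hj => ?_]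
      · simp [add_comm]
      · rw [hhigh (j + 1) (by omega) (by rw [mem_range] at hj; omega), smul_zero]
    · exact hhigh (j + 1) (by omega) (by omega)

theorem Commute.mul_pow_mul_mul_pow_eq {R : Type*} [Semiring R] {v p z z' : R} (hvp : Commute v p)
    (hz : v * z = z * v + p * z' * p) (k : ℕ) :
    v * (p ^ k * z * p ^ k) = p ^ k * z * p ^ k * v + p ^ (k + 1) * z' * p ^ (k + 1) := by
  have hk := (hvp.pow_right k).eq
  calc v * (p ^ k * z * p ^ k) = p ^ k * (v * z) * p ^ k := by
        simp only [← mul_assoc, hk]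
    _ = p ^ k * z * (v * p ^ k) + p ^ (k + 1) * z' * p ^ (k + 1) := by
        rw [hz]; nth_rw 1 [pow_succ]; rw [pow_succ']; noncomm_ring
    _ = _ := by simp only [hk, mul_assoc]

theorem mul_mul_pow_mul_eq_add {R : Type*} [Semiring R] {v w a a' : R} (hvw : v * w = 1)
    (ha : v * a = a * v + a') (k : ℕ) : v * (a * w ^ k) * w = a * w ^ k + a' * w ^ (k + 1) := by
  calc v * (a * w ^ k) * w = (v * a) * w ^ (k + 1) := by rw [pow_succ]; noncomm_ring
    _ = a * (v * w) * w ^ k + a' * w ^ (k + 1) := by rw [ha, pow_succ']; noncomm_ring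
    _ = _ := by rw [hvw, mul_one]

theorem pow_mul_mul_pow_eq_sum_choose {R : Type*} [Semiring R] {v w p : R} (hvw : v * w = 1)
    (hvp : Commute v p) {z : ℕ → R} {n : ℕ}
    (hz : ∀ k < n, v * z k = z k * v + p * z (k + 1) * p) (hn : z n = 0) (m : ℕ) :
    v ^ m * z 0 * w ^ m = ∑ k ∈ range (n + 1), m.choose k • (p ^ k * z k * p ^ k * w ^ k) := by
  let f : R →+ R := (AddMonoidHom.mulRight w).comp (AddMonoidHom.mulLeft v)
  have hf : ∀ m a, f^[m] a = v ^ m * a * w ^ m := fun m a => by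
    induction m with
    | zero => simp
    | succ m ih =>
      rw [Function.iterate_succ_apply', ih, pow_succ', pow_succ]
      simp only [f, AddMonoidHom.coe_comp, Function.comp_apply, AddMonoidHom.coe_mulLeft,
        AddMonoidHom.coe_mulRight, mul_assoc]
  have := iterate_map_eq_sum_choose_smul f (fun k => p ^ k * z k * p ^ k * w ^ k)
    (fun k hk => mul_mul_pow_mul_eq_add hvw (hvp.mul_pow_mul_mul_pow_eq (hz k hk) k) k)
    (by simp [f, hn]) m
  simpa [hf] using this

theorem LinearIsometryEquiv.norm_pow_mul_mul_pow_symm_le {𝕜 E : Type*} [NontriviallyNormedField 𝕜]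
    [SeminormedAddCommGroup E] [NormedSpace 𝕜 E] (e : E ≃ₗᵢ[𝕜] E) (T : E →L[𝕜] E) (m : ℕ) :
    ‖(e : E →L[𝕜] E) ^ m * T * (e.symm : E →L[𝕜] E) ^ m‖ ≤ ‖T‖ := by
  induction m generalizing T with
  | zero => simp
  | succ m ih =>
    calc _ = ‖(e : E →L[𝕜] E) ^ m * ((e : E →L[𝕜] E) * T * (e.symm : E →L[𝕜] E)) *
          (e.symm : E →L[𝕜] E) ^ m‖ := by rw [pow_succ, pow_succ']; simp only [mul_assoc]
      _ ≤ ‖(e : E →L[𝕜] E)‖ * ‖T‖ * ‖(e.symm : E →L[𝕜] E)‖ := (ih _).trans norm_mul₃_le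
      _ ≤ 1 * ‖T‖ * 1 := by
        gcongr
        exacts [e.toLinearIsometry.norm_toContinuousLinearMap_le,
          e.symm.toLinearIsometry.norm_toContinuousLinearMap_le]
      _ = ‖T‖ := by ring

namespace LinearPMap

variable {H : Type*} [NormedAddCommGroup H] [InnerProductSpace ℂ H] {D : H →ₗ.[ℂ] H}

theorem IsFormalAdjoint.norm_add_smul_sq (hD : D.IsFormalAdjoint D) {c : ℂ} (hc : c.re = 0)
    (a : D.domain) : ‖D a + c • (a : H)‖ ^ 2 = ‖D a‖ ^ 2 + ‖c • (a : H)‖ ^ 2 := by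
  have hreal : (⟪D a, a⟫_ℂ).im = 0 := by
    rw [← conj_eq_iff_im, inner_conj_symm]
    exact (hD a a).symm
  rw [@norm_add_sq ℂ, inner_smul_right, RCLike.re_to_complex, mul_re, hc, hreal]
  ring

theorem IsFormalAdjoint.norm_le_norm_add_smul (hD : D.IsFormalAdjoint D) {c : ℂ} (hc : c.re = 0)
    (a : D.domain) : ‖D a‖ ≤ ‖D a + c • (a : H)‖ :=
  le_of_sq_le_sq (by rw [hD.norm_add_smul_sq hc]; exact le_add_of_nonneg_right (by positivity))
    (norm_nonneg _)

theorem IsFormalAdjoint.norm_smul_le_norm_add_smul (hD : D.IsFormalAdjoint D) {c : ℂ}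
    (hc : c.re = 0) (a : D.domain) : ‖c • (a : H)‖ ≤ ‖D a + c • (a : H)‖ :=
  le_of_sq_le_sq (by rw [hD.norm_add_smul_sq hc]; exact le_add_of_nonneg_left (by positivity))
    (norm_nonneg _)

theorem IsFormalAdjoint.injective_add_smul (hD : D.IsFormalAdjoint D) {c : ℂ} (hc : c.re = 0)
    (hc0 : c ≠ 0) : Function.Injective (D.toFun + c • D.domain.subtype) := by
  refine (injective_iff_map_eq_zero _).2 fun a ha => ?_
  have := hD.norm_smul_le_norm_add_smul hc a
  change ‖c • (a : H)‖ ≤ ‖(D.toFun + c • D.domain.subtype) a‖ at this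
  rw [ha, norm_zero, norm_le_zero_iff, smul_eq_zero] at this
  exact Subtype.ext (this.resolve_left hc0)

theorem IsFormalAdjoint.isClosed_range_add_smul [CompleteSpace H] (hD : D.IsFormalAdjoint D)
    (hcl : D.IsClosed) {c : ℂ} (hc : c.re = 0) (hc0 : c ≠ 0) :
    _root_.IsClosed (LinearMap.range (D.toFun + c • D.domain.subtype) : Set H) := by
  have : CompleteSpace D.graph := hcl.completeSpace_coe
  let L : D.graph →L[ℂ] H :=
    (ContinuousLinearMap.snd ℂ H H + c • ContinuousLinearMap.fst ℂ H H).comp D.graph.subtypeL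
  have hL : ∀ a : D.domain, L ⟨((a : H), D a), D.mem_graph a⟩ = D a + c • (a : H) := fun a => by
    simp [L, add_comm]
  have hrange : Set.range L = LinearMap.range (D.toFun + c • D.domain.subtype) := by
    ext u
    constructor
    · rintro ⟨⟨p, hp⟩, rfl⟩
      obtain ⟨a, rfl⟩ := D.mem_graph_iff'.1 hp
      exact ⟨a, (hL a).symm⟩
    · rintro ⟨a, rfl⟩
      exact ⟨_, hL a⟩
  have hbound : ∀ p, ‖p‖ ≤ (‖c‖₊⁻¹ + 1 : NNReal) * ‖L p‖ := by
    rintro ⟨p, hp⟩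
    obtain ⟨a, rfl⟩ := D.mem_graph_iff'.1 hp
    rw [hL, Submodule.coe_norm, Prod.norm_mk, NNReal.coe_add, NNReal.coe_inv, coe_nnnorm,
      NNReal.coe_one, add_mul, one_mul]
    refine max_le ?_ ((hD.norm_le_norm_add_smul hc a).trans (le_add_of_nonneg_left (by positivity)))
    calc ‖(a : H)‖ = ‖c‖⁻¹ * ‖c • (a : H)‖ := by
          rw [norm_smul, inv_mul_cancel_left₀ (norm_ne_zero_iff.2 hc0)]
      _ ≤ ‖c‖⁻¹ * ‖D a + c • (a : H)‖ := by gcongr; exact hD.norm_smul_le_norm_add_smul hc a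
      _ ≤ _ := le_add_of_nonneg_right (norm_nonneg _)
  rw [← hrange]
  exact (L.antilipschitz_of_bound hbound).isClosed_range L.uniformContinuous

theorem IsFormalAdjoint.norm_add_neg_smul (hD : D.IsFormalAdjoint D) {c : ℂ} (hc : c.re = 0)
    (a : D.domain) : ‖D a + (-c) • (a : H)‖ = ‖D a + c • (a : H)‖ :=
  (sq_eq_sq₀ (norm_nonneg _) (norm_nonneg _)).1 <| by
    rw [hD.norm_add_smul_sq hc, hD.norm_add_smul_sq (by simpa using hc), neg_smul, norm_neg]

variable [CompleteSpace H]

theorem _root_.IsSelfAdjoint.isFormalAdjoint (hD : IsSelfAdjoint D) : D.IsFormalAdjoint D := by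
  simpa only [isSelfAdjoint_def.1 hD] using D.adjoint_isFormalAdjoint hD.dense_domain

theorem _root_.IsSelfAdjoint.surjective_add_smul (hD : IsSelfAdjoint D) {c : ℂ} (hc : c.re = 0)
    (hc0 : c ≠ 0) : Function.Surjective (D.toFun + c • D.domain.subtype) := by
  have hclosed := hD.isFormalAdjoint.isClosed_range_add_smul hD.isClosed hc hc0
  rw [← LinearMap.range_eq_top, ← hclosed.submodule_topologicalClosure_eq,
    Submodule.topologicalClosure_eq_top_iff, Submodule.eq_bot_iff]
  intro v hv
  have hconj : starRingEnd ℂ c = -c := Complex.ext (by simp [hc]) (by simp)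
  have hw : ∀ a : D.domain, ⟪c • v, (a : H)⟫_ℂ = ⟪v, D a⟫_ℂ := fun a => by
    have h := (Submodule.mem_orthogonal _ _).1 hv _ ⟨a, rfl⟩
    change ⟪D a + c • (a : H), v⟫_ℂ = 0 at h
    rw [inner_add_left, inner_smul_left, hconj] at h
    rw [inner_smul_left, hconj, ← inner_conj_symm v (D a), (by linear_combination h :
      ⟪D a, v⟫_ℂ = c * ⟪(a : H), v⟫_ℂ), map_mul, hconj, inner_conj_symm]
  -- A vector orthogonal to the range is an eigenvector of `D† = D` for `c`, which the
  -- injectivity of `D - c` rules out.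
  have hgraph : (v, c • v) ∈ D†.graph :=
    D†.mem_graph_iff.2 ⟨⟨v, mem_adjoint_domain_of_exists v ⟨_, hw⟩⟩, rfl,
      adjoint_apply_eq hD.dense_domain _ hw⟩
  rw [isSelfAdjoint_def.1 hD] at hgraph
  obtain ⟨a, ha⟩ := D.mem_graph_iff'.1 hgraph
  obtain ⟨rfl, hDa⟩ := Prod.mk.inj ha
  have hker : (D.toFun + (-c) • D.domain.subtype) a = 0 := by
    change D a + (-c) • (a : H) = 0
    rw [hDa, neg_smul, add_neg_cancel]
  have := (injective_iff_map_eq_zero _).1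
    (hD.isFormalAdjoint.injective_add_smul (by simpa using hc) (neg_ne_zero.2 hc0)) a hker
  rw [this, ZeroMemClass.coe_zero]

noncomputable def addSMulEquiv (hD : IsSelfAdjoint D) {c : ℂ} (hc : c.re = 0) (hc0 : c ≠ 0) :
    D.domain ≃ₗ[ℂ] H :=
  LinearEquiv.ofBijective (D.toFun + c • D.domain.subtype)
    ⟨hD.isFormalAdjoint.injective_add_smul hc hc0, hD.surjective_add_smul hc hc0⟩

theorem addSMulEquiv_apply (hD : IsSelfAdjoint D) {c : ℂ} (hc : c.re = 0) (hc0 : c ≠ 0)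
    (a : D.domain) : addSMulEquiv hD hc hc0 a = D a + c • (a : H) :=
  rfl

noncomputable def cayley (hD : IsSelfAdjoint D) : H ≃ₗᵢ[ℂ] H :=
  let Tp := addSMulEquiv hD (c := I) (by simp) I_ne_zero
  let Tm := addSMulEquiv hD (c := -I) (by simp) (neg_ne_zero.2 I_ne_zero)
  { Tp.symm.trans Tm with
    norm_map' := fun u => by
      obtain ⟨a, rfl⟩ := Tp.surjective u
      simp only [LinearEquiv.trans_apply, LinearEquiv.symm_apply_apply]
      exact hD.isFormalAdjoint.norm_add_neg_smul (by simp) a }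

variable (hD : IsSelfAdjoint D)
include hD

theorem cayley_apply_add_I_smul (a : D.domain) :
    cayley hD (D a + I • (a : H)) = D a - I • (a : H) := by
  rw [← addSMulEquiv_apply hD (c := I) (by simp) I_ne_zero, sub_eq_add_neg, ← neg_smul,
    ← addSMulEquiv_apply hD (c := -I) (by simp) (neg_ne_zero.2 I_ne_zero)]
  exact congrArg (addSMulEquiv hD _ _) (LinearEquiv.symm_apply_apply _ a)

theorem exists_add_I_smul_eq (u : H) : ∃ a : D.domain, D a + I • (a : H) = u :=
  hD.surjective_add_smul (by simp) I_ne_zero u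

theorem add_I_smul_sub_cayley_apply (a : D.domain) :
    D a + I • (a : H) - cayley hD (D a + I • (a : H)) = (2 * I) • (a : H) := by
  rw [cayley_apply_add_I_smul]; module

theorem cayley_apply_eq_self_iff {u : H} : cayley hD u = u ↔ u = 0 := by
  refine ⟨fun hu => ?_, fun hu => by rw [hu, LinearIsometryEquiv.map_zero]⟩
  obtain ⟨a, rfl⟩ := exists_add_I_smul_eq hD u
  rw [cayley_apply_add_I_smul] at hu
  have h2a : (2 * I) • (a : H) = 0 := by linear_combination (norm := module) -hu
  obtain rfl : a = 0 := Subtype.ext ((smul_eq_zero.1 h2a).resolve_left (by simp))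
  simp

theorem cayley_mul_eq (y y' : H →L[ℂ] H) (hmap : ∀ a : D.domain, y a ∈ D.domain)
    (hder : ∀ a : D.domain, y' a = I • (D ⟨y a, hmap a⟩ - y (D a))) :
    (cayley hD : H →L[ℂ] H) * y = y * (cayley hD : H →L[ℂ] H) +
      (-2⁻¹ : ℂ) • ((1 - (cayley hD : H →L[ℂ] H)) * y' * (1 - (cayley hD : H →L[ℂ] H))) := by
  ext u
  obtain ⟨a, rfl⟩ := exists_add_I_smul_eq hD u
  obtain ⟨b, hb⟩ : ∃ b : D.domain, (b : H) = y a := ⟨⟨y a, hmap a⟩, rfl⟩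
  have hya : y (D a) = D b + I • y' a := by
    rw [hder a, show (⟨y a, hmap a⟩ : D.domain) = b from Subtype.ext hb.symm, smul_smul, I_mul_I,
      neg_one_smul]
    abel
  have hplus : y (D a + I • (a : H)) = (D b + I • (b : H)) + I • y' a := by
    rw [_root_.map_add, _root_.map_smul, hya, hb]; abel
  have hminus : y (D a - I • (a : H)) = (D b - I • (b : H)) + I • y' a := by
    rw [_root_.map_sub, _root_.map_smul, hya, hb]; abel
  simp only [mul_apply_eq_comp, _root_.add_apply, _root_.sub_apply,
    one_apply_eq_self, _root_.smul_apply, ContinuousLinearEquiv.coe_coe,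
    LinearIsometryEquiv.coe_toContinuousLinearEquiv]
  rw [add_I_smul_sub_cayley_apply, hplus, _root_.map_add, cayley_apply_add_I_smul,
    cayley_apply_add_I_smul, hminus, _root_.map_smul, _root_.map_smul, _root_.map_smul]
  module

theorem eq_zero_of_one_sub_cayley_mul_mul_eq_zero {T : H →L[ℂ] H}
    (hT : (1 - (cayley hD : H →L[ℂ] H)) * T * (1 - (cayley hD : H →L[ℂ] H)) = 0) : T = 0 := by
  have hdom : Set.EqOn T 0 D.domain := fun u hu => by
    have h := congr($hT (D ⟨u, hu⟩ + I • u))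
    simp only [mul_apply_eq_comp, _root_.sub_apply, one_apply_eq_self,
      ContinuousLinearEquiv.coe_coe, LinearIsometryEquiv.coe_toContinuousLinearEquiv,
      _root_.zero_apply] at h
    rw [add_I_smul_sub_cayley_apply hD ⟨u, hu⟩, sub_eq_zero, eq_comm,
      cayley_apply_eq_self_iff hD, _root_.map_smul, smul_eq_zero] at h
    exact h.resolve_left (by simp)
  exact DFunLike.coe_injective (Continuous.ext_on hD.dense_domain T.continuous continuous_zero hdom)

end LinearPMap

theorem kernel_stabilization_general {H : Type*} [NormedAddCommGroup H] [InnerProductSpace ℂ H]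
    [CompleteSpace H] (D : H →ₗ.[ℂ] H)
    (hsa : D.adjoint = D) (n : ℕ) (hn : 1 ≤ n) (x : H →L[ℂ] H) (y : ℕ → H →L[ℂ] H)
    (hy0 : y 0 = x)
    (hmap : ∀ k, k < n → ∀ h : D.domain, y k h ∈ D.domain)
    (hder : ∀ k (hk : k < n) (h : D.domain),
      y (k + 1) (h : H) = Complex.I • (D ⟨y k h, hmap k hk h⟩ - y k (D h)))
    (hker : y n = 0) :
    y 1 = 0 := by
  have hD : IsSelfAdjoint D := hsa
  set U := LinearPMap.cayley hD
  set v : H →L[ℂ] H := (U : H →L[ℂ] H)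
  set w : H →L[ℂ] H := (U.symm : H →L[ℂ] H)
  set z : ℕ → H →L[ℂ] H := fun k => (-2⁻¹ : ℂ) ^ k • y k
  have hz : ∀ k < n, v * z k = z k * v + (1 - v) * z (k + 1) * (1 - v) := fun k hk => by
    have h : v * y k = y k * v + (-2⁻¹ : ℂ) • ((1 - v) * y (k + 1) * (1 - v)) :=
      LinearPMap.cayley_mul_eq hD _ _ (hmap k hk) (hder k hk)
    simp only [z, mul_smul_comm, smul_mul_assoc, h, smul_add, pow_succ, mul_smul]
  have hvw : v * w = 1 := by ext; simp [v, w]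
  have hwv : w * v = 1 := by ext; simp [v, w]
  have hexp := pow_mul_mul_pow_eq_sum_choose hvw
    ((Commute.one_right v).sub_right (Commute.refl v)) hz (by simp [z, hker])
  have hx : z 0 = x := by simp [z, hy0]
  have hg1 := eq_zero_of_forall_norm_sum_choose_smul_le (fun m => by
    rw [← hexp m, hx]; exact U.norm_pow_mul_mul_pow_symm_le x m) one_pos hn
  have hy1 : (-2⁻¹ : ℂ) • ((1 - v) * y 1 * (1 - v)) = 0 := by
    calc _ = ((1 - v) ^ 1 * z 1 * (1 - v) ^ 1 * w ^ 1) * v := by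
          simp only [z, pow_one, mul_assoc, mul_smul_comm, smul_mul_assoc, hwv, mul_one]
      _ = 0 := by rw [hg1, zero_mul]
  exact LinearPMap.eq_zero_of_one_sub_cayley_mul_mul_eq_zero hD
    ((smul_eq_zero.1 hy1).resolve_left (by norm_num))

/-- **Kernel stabilization** (Theorem 3.5 of the paper). Let `D` be a densely defined
self-adjoint operator on a complex Hilbert space `H`, let `n ≥ 1`, and let `x` be an
`n`-times weakly `D`-differentiable bounded operator with iterated weak derivatives
`y k = (δ^D_w)^k(x)` (so `y 0 = x`, each `y k` (`k < n`) preserves `dom D`, and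
`y (k+1) h = i • (D (y k h) - y k (D h))` for `h ∈ dom D`).  If `(δ^D_w)^n(x) = 0`
then `δ^D_w(x) = 0`; that is, `ker (δ^D_w)^n = ker δ^D_w`. -/
theorem kernel_stabilization {H : Type*} [NormedAddCommGroup H] [InnerProductSpace ℂ H]
    [CompleteSpace H] (D : H →ₗ.[ℂ] H) (hdense : Dense (D.domain : Set H))
    (hsa : D.adjoint = D) (n : ℕ) (hn : 1 ≤ n) (x : H →L[ℂ] H) (y : ℕ → H →L[ℂ] H)
    (hy0 : y 0 = x)
    (hmap : ∀ k, k < n → ∀ h : D.domain, y k h ∈ D.domain)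
    (hder : ∀ k (hk : k < n) (h : D.domain),
      y (k + 1) (h : H) = Complex.I • (D ⟨y k h, hmap k hk h⟩ - y k (D h)))
    (hker : y n = 0) :
    y 1 = 0 :=
  kernel_stabilization_general D hsa n hn x y hy0 hmap hder hker
end

section
/- Let H be a complex Hilbert space and D a densely defined self-adjoint operator on H. If a bounded operator x on H maps dom D into dom D and satisfies D(x h) = x(D h) for all h ∈ dom D (i.e., x ∈ ker δ^D_w), then its Hilbert-space adjoint x* also maps dom D into dom D and satisfies D(x* h) = x*(D h) for all h ∈ dom D (i.e., x* ∈ ker δ^D_w). In particular, ker δ^D_w is closed under the adjoint operation. -/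
open scoped InnerProductSpace LinearPMap

namespace LinearPMap

variable {𝕜 E F : Type*} [RCLike 𝕜] [NormedAddCommGroup E] [InnerProductSpace 𝕜 E]
  [NormedAddCommGroup F] [InnerProductSpace 𝕜 F]

/-- For `x = y` this is membership of `x` in the kernel of the weak derivation `δ^T_w`. -/
def Intertwines (T : E →ₗ.[𝕜] F) (x : E →L[𝕜] E) (y : F →L[𝕜] F) : Prop :=
  ∀ u : T.domain, ∃ hu : x u ∈ T.domain, T ⟨x u, hu⟩ = y (T u)

variable [CompleteSpace E] [CompleteSpace F] {T : E →ₗ.[𝕜] F} {x : E →L[𝕜] E} {y : F →L[𝕜] F}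

theorem Intertwines.inner_adjoint_apply (hT : Dense (T.domain : Set E)) (hxy : T.Intertwines x y)
    (h : T†.domain) (u : T.domain) :
    ⟪x.adjoint (T† h), (u : E)⟫_𝕜 = ⟪y.adjoint h, T u⟫_𝕜 := by
  obtain ⟨hu, hTu⟩ := hxy u
  calc ⟪x.adjoint (T† h), (u : E)⟫_𝕜
      = ⟪T† h, x u⟫_𝕜 := ContinuousLinearMap.adjoint_inner_left _ _ _
    _ = ⟪(h : F), T ⟨x u, hu⟩⟫_𝕜 := adjoint_isFormalAdjoint hT h ⟨x u, hu⟩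
    _ = ⟪y.adjoint h, T u⟫_𝕜 := by
        rw [hTu, ContinuousLinearMap.adjoint_inner_left]

theorem Intertwines.adjoint (hT : Dense (T.domain : Set E)) (hxy : T.Intertwines x y) :
    T†.Intertwines y.adjoint x.adjoint := fun h =>
  have hmem : y.adjoint h ∈ T†.domain :=
    mem_adjoint_domain_of_exists _ ⟨_, hxy.inner_adjoint_apply hT h⟩
  ⟨hmem, adjoint_apply_eq hT ⟨_, hmem⟩ (hxy.inner_adjoint_apply hT h)⟩

end LinearPMap

/-- **`ker δ^D_w` is closed under adjoints.** If a bounded operator `x` on a complex Hilbert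
space preserves the domain of a densely defined self-adjoint operator `D` and commutes with `D`
on `dom D` (i.e. `x ∈ ker δ^D_w`), then the Hilbert-space adjoint `x*` also preserves `dom D`
and commutes with `D` on `dom D` (i.e. `x* ∈ ker δ^D_w`). -/
theorem ker_weak_derivation_star_mem {H : Type*} [NormedAddCommGroup H]
    [InnerProductSpace ℂ H] [CompleteSpace H] (D : H →ₗ.[ℂ] H)
    (hdense : Dense (D.domain : Set H)) (hsa : D.adjoint = D) (x : H →L[ℂ] H)
    (hx : ∀ h : D.domain, x h ∈ D.domain)
    (hxD : ∀ h : D.domain, D ⟨x h, hx h⟩ = x (D h)) :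
    ∀ h : D.domain, ∃ hm : ContinuousLinearMap.adjoint x h ∈ D.domain,
      D ⟨ContinuousLinearMap.adjoint x h, hm⟩ = ContinuousLinearMap.adjoint x (D h) := by
  have hcomm : D.Intertwines x x := fun h => ⟨hx h, hxD h⟩
  have hcomm_adjoint := hcomm.adjoint hdense
  rwa [hsa] at hcomm_adjoint
end

section
/- Let H be a complex Hilbert space and D a densely defined self-adjoint operator on H. Let ι be an index type, l a nontrivial filter on ι, and f : ι → B(H) a net of bounded operators each of which maps dom D into dom D and satisfies D(f i h) = f i (D h) for all h ∈ dom D (i.e., each f i ∈ ker δ^D_w). If x is a bounded operator on H such that for all h, k ∈ H the net ⟨f i h, k⟩ converges along l to ⟨x h, k⟩ (i.e., f i → x in the weak operator topology), then x maps dom D into dom D and D(x h) = x(D h) for all h ∈ dom D (i.e., x ∈ ker δ^D_w). In particular, ker δ^D_w is closed in the weak operator topology. -/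
open scoped InnerProductSpace

/-- **`ker δ^D_w` is closed in the weak operator topology.** Let `D` be a densely defined
self-adjoint operator on a complex Hilbert space `H` and let `(f i)` be a net of bounded
operators, each preserving `dom D` and commuting with `D` on `dom D` (i.e. each
`f i ∈ ker δ^D_w`).  If `f i → x` in the weak operator topology (all matrix coefficients
`⟪f i h, k⟫` converge to `⟪x h, k⟫`), then `x` preserves `dom D` and commutes with `D`
on `dom D`; i.e. `x ∈ ker δ^D_w`. -/
theorem ker_weak_derivation_wot_closed {H : Type*} [NormedAddCommGroup H]
    [InnerProductSpace ℂ H] [CompleteSpace H] (D : H →ₗ.[ℂ] H)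
    (hdense : Dense (D.domain : Set H)) (hsa : D.adjoint = D)
    {ι : Type*} (l : Filter ι) [l.NeBot] (f : ι → (H →L[ℂ] H))
    (hf : ∀ i, ∀ h : D.domain, f i h ∈ D.domain)
    (hfD : ∀ i, ∀ h : D.domain, D ⟨f i h, hf i h⟩ = f i (D h))
    (x : H →L[ℂ] H)
    (hconv : ∀ h k : H, Filter.Tendsto (fun i => ⟪f i h, k⟫_ℂ) l (nhds ⟪x h, k⟫_ℂ)) :
    ∀ h : D.domain, ∃ hm : x h ∈ D.domain, D ⟨x h, hm⟩ = x (D h) := by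
  -- symmetry of D from self-adjointness
  have hsym : ∀ a b : D.domain, ⟪D a, (b : H)⟫_ℂ = ⟪(a : H), D b⟫_ℂ := by
    have := LinearPMap.adjoint_isFormalAdjoint hdense (T := D)
    rw [hsa] at this
    exact this
  intro h
  -- key identity: ⟪x (D h), k⟫ = ⟪x h, D k⟫ for all k in dom D
  have key : ∀ k : D.domain, ⟪x (D h), (k : H)⟫_ℂ = ⟪x h, D k⟫_ℂ := by
    intro k
    have heq : (fun i => ⟪f i (D h), (k : H)⟫_ℂ) = fun i => ⟪f i h, D k⟫_ℂ := by
      funext i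
      rw [← hfD i h, hsym ⟨f i h, hf i h⟩ k]
    have t1 := hconv (D h) k
    have t2 := hconv h (D k)
    rw [heq] at t1
    exact tendsto_nhds_unique t1 t2
  have hm' : x h ∈ D.adjoint.domain :=
    LinearPMap.mem_adjoint_domain_of_exists _ ⟨x (D h), key⟩
  have hval : D.adjoint ⟨x h, hm'⟩ = x (D h) :=
    LinearPMap.adjoint_apply_eq hdense ⟨x h, hm'⟩ key
  have : ∃ hm : x h ∈ D.adjoint.domain, D.adjoint ⟨x h, hm⟩ = x (D h) := ⟨hm', hval⟩
  rw [hsa] at this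
  exact this
end

section
/- Let H be a complex Hilbert space and D a densely defined self-adjoint operator on H. Let X be a submodule of H contained in dom D such that X is a core for D (the closure of the restriction of D to X equals D). Suppose x and y are bounded operators on H such that: (i) for every h ∈ X, x h ∈ dom D and y h = D(x h) − x(D h) (so the commutator [D, x] is defined on the core X and y is its bounded extension), and (ii) y maps dom D into dom D and D(y h) = y(D h) for all h ∈ dom D (so y lies in the commutant of the von Neumann algebra generated by the spectral projections of D, i.e., y ∈ ker δ^D_w). Then y = 0. -/
set_option linter.unusedSectionVars false

open scoped InnerProductSpace ComplexConjugate

section AuxCommutator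

variable {H : Type*} [NormedAddCommGroup H] [InnerProductSpace ℂ H] [CompleteSpace H]

lemma aux_sym (D : H →ₗ.[ℂ] H) (hdense : Dense (D.domain : Set H)) (hsa : D.adjoint = D) :
    ∀ g h : D.domain, ⟪(D g : H), (h : H)⟫_ℂ = ⟪(g : H), D h⟫_ℂ := by
  have := LinearPMap.adjoint_isFormalAdjoint (T := D) hdense
  unfold LinearPMap.IsFormalAdjoint at this
  rw [hsa] at this
  exact this

lemma aux_graph_mem (D : H →ₗ.[ℂ] H) (hdense : Dense (D.domain : Set H))
    (hsa : D.adjoint = D) {h k : H}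
    (hrel : ∀ g : D.domain, ⟪k, (g : H)⟫_ℂ = ⟪h, D g⟫_ℂ) : (h, k) ∈ D.graph := by
  have hmem : h ∈ D.adjoint.domain :=
    LinearPMap.mem_adjoint_domain_of_exists h ⟨k, hrel⟩
  have happ : D.adjoint ⟨h, hmem⟩ = k :=
    LinearPMap.adjoint_apply_eq hdense _ (fun g => hrel g)
  have : (h, k) ∈ D.adjoint.graph := by
    rw [LinearPMap.mem_graph_iff]
    exact ⟨⟨h, hmem⟩, rfl, happ⟩
  rwa [hsa] at this

lemma aux_closed (D : H →ₗ.[ℂ] H) (hdense : Dense (D.domain : Set H))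
    (hsa : D.adjoint = D) : D.IsClosed := by
  rw [LinearPMap.IsClosed, ← isSeqClosed_iff_isClosed]
  intro f p hf hp
  have hp1 : Filter.Tendsto (fun n => (f n).1) Filter.atTop (nhds p.1) :=
    (continuous_fst.tendsto p).comp hp
  have hp2 : Filter.Tendsto (fun n => (f n).2) Filter.atTop (nhds p.2) :=
    (continuous_snd.tendsto p).comp hp
  refine aux_graph_mem D hdense hsa (fun g => ?_)
  have hn : ∀ n, ⟪(f n).2, (g : H)⟫_ℂ = ⟪(f n).1, D g⟫_ℂ := by
    intro n
    obtain ⟨u, hu1, hu2⟩ := (LinearPMap.mem_graph_iff D).mp (hf n)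
    rw [← hu1, ← hu2]
    exact aux_sym D hdense hsa u g
  have t1 : Filter.Tendsto (fun n => ⟪(f n).2, (g : H)⟫_ℂ) Filter.atTop (nhds ⟪p.2, (g:H)⟫_ℂ) :=
    hp2.inner tendsto_const_nhds
  have t2 : Filter.Tendsto (fun n => ⟪(f n).1, (D g : H)⟫_ℂ) Filter.atTop
      (nhds ⟪p.1, (D g : H)⟫_ℂ) := hp1.inner tendsto_const_nhds
  exact tendsto_nhds_unique (t1.congr (fun n => (hn n))) t2

/-- The operator `D + c` for a scalar `c`, as a linear map on the domain. -/
noncomputable def auxT (D : H →ₗ.[ℂ] H) (c : ℂ) : D.domain →ₗ[ℂ] H where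
  toFun h := (D h : H) + c • (h : H)
  map_add' g h := by
    simp only [LinearPMap.map_add, Submodule.coe_add, smul_add]; abel
  map_smul' r h := by
    simp only [LinearPMap.map_smul, Submodule.coe_smul, RingHom.id_apply]
    rw [smul_add, smul_comm]

lemma auxT_apply (D : H →ₗ.[ℂ] H) (c : ℂ) (h : D.domain) :
    auxT D c h = (D h : H) + c • (h : H) := rfl

lemma aux_normsq (D : H →ₗ.[ℂ] H) (hdense : Dense (D.domain : Set H)) (hsa : D.adjoint = D)
    (c : ℂ) (hc : c.re = 0) (h : D.domain) :
    ‖auxT D c h‖ ^ 2 = ‖(D h : H)‖ ^ 2 + ‖c‖ ^ 2 * ‖(h : H)‖ ^ 2 := by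
  have hreal : (⟪(D h : H), (h : H)⟫_ℂ).im = 0 := by
    have h1 : conj ⟪(D h : H), (h : H)⟫_ℂ = ⟪(D h : H), (h : H)⟫_ℂ := by
      rw [inner_conj_symm]
      exact (aux_sym D hdense hsa h h).symm
    have := Complex.conj_eq_iff_im.mp h1
    exact this
  have hin : ⟪(D h : H), c • (h : H)⟫_ℂ = c * ⟪(D h : H), (h : H)⟫_ℂ :=
    inner_smul_right _ _ _
  rw [auxT_apply, @norm_add_sq ℂ, hin, norm_smul]
  have hre : RCLike.re (c * ⟪(D h : H), (h : H)⟫_ℂ) = 0 := by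
    simp only [RCLike.re_to_complex, Complex.mul_re, hc, hreal, mul_zero, zero_mul, sub_zero,
      zero_add]
  rw [hre]
  ring

lemma aux_norm_le (D : H →ₗ.[ℂ] H) (hdense : Dense (D.domain : Set H)) (hsa : D.adjoint = D)
    (c : ℂ) (hc : c.re = 0) (hc1 : ‖c‖ = 1) (h : D.domain) :
    ‖(h : H)‖ ≤ ‖auxT D c h‖ ∧ ‖(D h : H)‖ ≤ ‖auxT D c h‖ := by
  have := aux_normsq D hdense hsa c hc h
  rw [hc1] at this
  constructor <;> nlinarith [norm_nonneg ((h : H)), norm_nonneg ((D h : H)),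
    norm_nonneg (auxT D c h), sq_nonneg (‖(D h : H)‖), sq_nonneg ‖(h : H)‖]

lemma aux_surj (D : H →ₗ.[ℂ] H) (hdense : Dense (D.domain : Set H)) (hsa : D.adjoint = D) :
    Function.Surjective (auxT D Complex.I) := by
  have hcre : (Complex.I).re = 0 := Complex.I_re
  have hc1 : ‖Complex.I‖ = 1 := Complex.norm_I
  set S : Submodule ℂ H := LinearMap.range (auxT D Complex.I) with hS
  -- S is closed
  have hSclosed : IsClosed (S : Set H) := by
    rw [← isSeqClosed_iff_isClosed]
    intro f ξ hf hξ
    choose g hg using hf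
    have hCauchyξ : CauchySeq f := hξ.cauchySeq
    have key : ∀ m n : ℕ, ‖(g m : H) - (g n : H)‖ ≤ ‖f m - f n‖ ∧
        ‖(D (g m) : H) - (D (g n) : H)‖ ≤ ‖f m - f n‖ := by
      intro m n
      have h1 := aux_norm_le D hdense hsa Complex.I hcre hc1 (g m - g n)
      have h2 : auxT D Complex.I (g m - g n) = f m - f n := by
        rw [map_sub, hg m, hg n]
      rw [h2] at h1
      simpa [LinearPMap.map_sub] using h1
    have hCa : CauchySeq (fun n => (g n : H)) := by
      rw [Metric.cauchySeq_iff] at hCauchyξ ⊢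
      intro ε hε
      obtain ⟨N, hN⟩ := hCauchyξ ε hε
      exact ⟨N, fun m hm n hn => lt_of_le_of_lt (by
        rw [dist_eq_norm]; exact (key m n).1.trans_eq (dist_eq_norm _ _).symm) (hN m hm n hn)⟩
    have hCb : CauchySeq (fun n => (D (g n) : H)) := by
      rw [Metric.cauchySeq_iff] at hCauchyξ ⊢
      intro ε hε
      obtain ⟨N, hN⟩ := hCauchyξ ε hε
      exact ⟨N, fun m hm n hn => lt_of_le_of_lt (by
        rw [dist_eq_norm]; exact (key m n).2.trans_eq (dist_eq_norm _ _).symm) (hN m hm n hn)⟩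
    obtain ⟨a, ha⟩ := cauchySeq_tendsto_of_complete hCa
    obtain ⟨b, hb⟩ := cauchySeq_tendsto_of_complete hCb
    have hmem : (a, b) ∈ D.graph := by
      have := (aux_closed D hdense hsa)
      rw [LinearPMap.IsClosed, ← isSeqClosed_iff_isClosed] at this
      exact this (fun n => D.mem_graph (g n)) (ha.prodMk_nhds hb)
    obtain ⟨u, hu1, hu2⟩ := (LinearPMap.mem_graph_iff D).mp hmem
    refine ⟨u, ?_⟩
    have hlim : Filter.Tendsto f Filter.atTop (nhds (b + Complex.I • a)) := by
      have : ∀ n, f n = (D (g n) : H) + Complex.I • (g n : H) := fun n => (hg n).symm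
      exact Filter.Tendsto.congr (fun n => (this n).symm)
        (hb.add (ha.const_smul Complex.I))
    have := tendsto_nhds_unique hlim hξ
    rw [auxT_apply, hu2, hu1, this]
  -- orthogonal complement is trivial
  have hSbot : Sᗮ = ⊥ := by
    rw [Submodule.eq_bot_iff]
    intro ξ hξ
    have hrel : ∀ g : D.domain, ⟪Complex.I • ξ, (g : H)⟫_ℂ = ⟪ξ, D g⟫_ℂ := by
      intro g
      have h0 : ⟪(D g : H) + Complex.I • (g : H), ξ⟫_ℂ = 0 :=
        (Submodule.mem_orthogonal S ξ).mp hξ _ ⟨g, rfl⟩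
      rw [inner_add_left, inner_smul_left] at h0
      have h1 : ⟪(D g : H), ξ⟫_ℂ = Complex.I * ⟪(g : H), ξ⟫_ℂ := by
        rw [Complex.conj_I] at h0
        linear_combination h0
      calc ⟪Complex.I • ξ, (g : H)⟫_ℂ = conj Complex.I * ⟪ξ, (g : H)⟫_ℂ := inner_smul_left _ _ _
        _ = conj (Complex.I * ⟪(g : H), ξ⟫_ℂ) := by
            rw [map_mul, inner_conj_symm]
        _ = conj ⟪(D g : H), ξ⟫_ℂ := by rw [h1]
        _ = ⟪ξ, D g⟫_ℂ := inner_conj_symm _ _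
    have hmem : (ξ, Complex.I • ξ) ∈ D.graph := aux_graph_mem D hdense hsa hrel
    obtain ⟨u, hu1, hu2⟩ := (LinearPMap.mem_graph_iff D).mp hmem
    have hsym := aux_sym D hdense hsa u u
    rw [hu2, hu1] at hsym
    rw [inner_smul_left, inner_smul_right, Complex.conj_I] at hsym
    have hnorm : ⟪ξ, ξ⟫_ℂ = 0 := by
      have : (2 * Complex.I) * ⟪ξ, ξ⟫_ℂ = 0 := by linear_combination -hsym
      simpa [Complex.I_ne_zero] using this
    exact inner_self_eq_zero.mp hnorm
  -- conclude
  haveI : CompleteSpace S := hSclosed.completeSpace_coe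
  have hStop : S = ⊤ := Submodule.orthogonal_eq_bot_iff.mp hSbot
  intro ξ
  have : ξ ∈ S := hStop ▸ Submodule.mem_top
  exact this

noncomputable def auxE (D : H →ₗ.[ℂ] H) (hbij : Function.Bijective (auxT D Complex.I)) :
    D.domain ≃ₗ[ℂ] H := LinearEquiv.ofBijective _ hbij

noncomputable def auxR (D : H →ₗ.[ℂ] H) (hbij : Function.Bijective (auxT D Complex.I))
    (hb : ∀ h : D.domain, ‖(h : H)‖ ≤ ‖auxT D Complex.I h‖) : H →L[ℂ] H :=
  LinearMap.mkContinuous ((D.domain.subtype).comp ((auxE D hbij).symm.toLinearMap)) 1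
    (fun ξ => by
      simp only [LinearMap.coe_comp, Function.comp_apply, Submodule.coe_subtype, one_mul]
      calc ‖((auxE D hbij).symm ξ : H)‖ ≤ ‖auxT D Complex.I ((auxE D hbij).symm ξ)‖ := hb _
        _ = ‖ξ‖ := by rw [show auxT D Complex.I ((auxE D hbij).symm ξ)
              = (auxE D hbij) ((auxE D hbij).symm ξ) from rfl, (auxE D hbij).apply_symm_apply])

section
variable (D : H →ₗ.[ℂ] H) (hbij : Function.Bijective (auxT D Complex.I))
  (hb : ∀ h : D.domain, ‖(h : H)‖ ≤ ‖auxT D Complex.I h‖)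

lemma auxR_mem (ξ : H) : auxR D hbij hb ξ ∈ D.domain := ((auxE D hbij).symm ξ).2

lemma auxR_spec (ξ : H) : auxT D Complex.I ⟨auxR D hbij hb ξ, auxR_mem D hbij hb ξ⟩ = ξ := by
  have h1 : (⟨auxR D hbij hb ξ, auxR_mem D hbij hb ξ⟩ : D.domain) = (auxE D hbij).symm ξ :=
    Subtype.ext rfl
  rw [h1, show auxT D Complex.I ((auxE D hbij).symm ξ)
      = (auxE D hbij) ((auxE D hbij).symm ξ) from rfl, (auxE D hbij).apply_symm_apply]

lemma auxR_of_dom (h : D.domain) : auxR D hbij hb (auxT D Complex.I h) = (h : H) := by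
  rw [show auxR D hbij hb (auxT D Complex.I h) = ((auxE D hbij).symm ((auxE D hbij) h) : H)
    from rfl, (auxE D hbij).symm_apply_apply]

end

end AuxCommutator

/-- **Proposition 4.9 of the paper.** Let `D` be a densely defined self-adjoint operator on a
complex Hilbert space `H`, and let `X ⊆ dom D` be a core for `D` (the closure of `D`
restricted to `X` equals `D`).  Suppose `x, y` are bounded operators such that the commutator
`[D, x]` is defined on `X` and equal there to `y` (so `y` is the bounded extension of
`[D, x]|_X`), and `y` preserves `dom D` and commutes with `D` on `dom D` (i.e. `y ∈ M_D'`,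
equivalently `y ∈ ker δ^D_w`).  Then `y = 0`. -/
theorem bounded_commutator_on_core_in_commutant_eq_zero {H : Type*} [NormedAddCommGroup H]
    [InnerProductSpace ℂ H] [CompleteSpace H] (D : H →ₗ.[ℂ] H)
    (hdense : Dense (D.domain : Set H)) (hsa : D.adjoint = D)
    (X : Submodule ℂ H) (hX : X ≤ D.domain)
    (hcore : (D.domRestrict X).closure = D)
    (x y : H →L[ℂ] H)
    (hxmem : ∀ h : X, x h ∈ D.domain)
    (hxy : ∀ h : X, y (h : H) = D ⟨x h, hxmem h⟩ - x (D ⟨(h : H), hX h.2⟩))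
    (hy : ∀ h : D.domain, y h ∈ D.domain)
    (hyD : ∀ h : D.domain, D ⟨y h, hy h⟩ = y (D h)) :
    y = 0 := by
  classical
  have hclosed := aux_closed D hdense hsa
  -- sequential closedness of the graph
  have hseq : ∀ (f : ℕ → H × H) (p : H × H), (∀ n, f n ∈ D.graph) →
      Filter.Tendsto f Filter.atTop (nhds p) → p ∈ D.graph := by
    intro f p hf hp
    have h0 := hclosed
    rw [LinearPMap.IsClosed, ← isSeqClosed_iff_isClosed] at h0
    exact h0 hf hp
  -- bijectivity of D + i
  have hb : ∀ h : D.domain, ‖(h : H)‖ ≤ ‖auxT D Complex.I h‖ :=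
    fun h => (aux_norm_le D hdense hsa Complex.I Complex.I_re Complex.norm_I h).1
  have hbij : Function.Bijective (auxT D Complex.I) := by
    constructor
    · intro a b hab
      have h0 : auxT D Complex.I (a - b) = 0 := by rw [map_sub, hab, sub_self]
      have h1 := hb (a - b)
      rw [h0, norm_zero] at h1
      have h2 : ((a - b : D.domain) : H) = 0 := norm_le_zero_iff.mp h1
      have h3 : (a - b : D.domain) = 0 := by exact_mod_cast h2
      exact sub_eq_zero.mp h3
    · exact aux_surj D hdense hsa
  set R : H →L[ℂ] H := auxR D hbij hb with hRdef
  have hRmem : ∀ ξ : H, R ξ ∈ D.domain := auxR_mem D hbij hb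
  have hRspec : ∀ ξ : H, auxT D Complex.I ⟨R ξ, hRmem ξ⟩ = ξ := auxR_spec D hbij hb
  have hRdom : ∀ h : D.domain, R (auxT D Complex.I h) = (h : H) := auxR_of_dom D hbij hb
  -- extension of the commutator relation from the core to the whole domain
  have hclosable : (D.domRestrict X).IsClosable :=
    hclosed.isClosable.leIsClosable (LinearPMap.domRestrict_le)
  have hgraph : D.graph = ((D.domRestrict X).graph).topologicalClosure := by
    rw [hclosable.graph_closure_eq_closure_graph, hcore]
  have hext : ∀ h : D.domain, (x (h : H), y (h : H) + x (D h)) ∈ D.graph := by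
    intro h
    have hmem : ((h : H), D h) ∈ closure ((D.domRestrict X).graph : Set (H × H)) := by
      have h0 : ((h : H), D h) ∈ D.graph := D.mem_graph h
      rw [hgraph] at h0
      exact h0
    obtain ⟨f, hf, hlim⟩ := mem_closure_iff_seq_limit.mp hmem
    have key : ∀ n, ((x (f n).1, y (f n).1 + x (f n).2)) ∈ D.graph := by
      intro n
      obtain ⟨u, hu1, hu2⟩ := (LinearPMap.mem_graph_iff _).mp (hf n)
      have huX : (u : H) ∈ X := (Submodule.mem_inf.mp u.2).1
      set v : X := ⟨(u : H), huX⟩ with hv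
      have hval : D.domRestrict X u = D ⟨(v : H), hX v.2⟩ := LinearPMap.domRestrict_apply rfl
      have h2 : D ⟨x (v : H), hxmem v⟩ = y (v : H) + x (D ⟨(v : H), hX v.2⟩) := by
        rw [hxy v]; abel
      have e1 : (f n).1 = (v : H) := hu1.symm
      have e2 : (f n).2 = D ⟨(v : H), hX v.2⟩ := by rw [← hu2, hval]
      rw [e1, e2, ← h2]
      exact D.mem_graph ⟨x (v : H), hxmem v⟩
    have hf1 : Filter.Tendsto (fun n => (f n).1) Filter.atTop (nhds (h : H)) :=
      (continuous_fst.tendsto _).comp hlim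
    have hf2 : Filter.Tendsto (fun n => (f n).2) Filter.atTop (nhds (D h)) :=
      (continuous_snd.tendsto _).comp hlim
    exact hseq _ _ key
      (((x.continuous.tendsto _).comp hf1).prodMk_nhds
        (((y.continuous.tendsto _).comp hf1).add ((x.continuous.tendsto _).comp hf2)))
  have hxdom : ∀ h : D.domain, x (h : H) ∈ D.domain := by
    intro h
    obtain ⟨u, hu1, hu2⟩ := (LinearPMap.mem_graph_iff D).mp (hext h)
    have hu1' : (u : H) = x (h : H) := hu1
    exact hu1' ▸ u.2
  have hxD : ∀ h : D.domain, D ⟨x (h : H), hxdom h⟩ = y (h : H) + x (D h) := by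
    intro h
    obtain ⟨u, hu1, hu2⟩ := (LinearPMap.mem_graph_iff D).mp (hext h)
    have hu1' : (u : H) = x (h : H) := hu1
    rw [show (⟨x (h : H), hxdom h⟩ : D.domain) = u from Subtype.ext hu1'.symm]
    exact hu2
  -- y commutes with R
  have hyR : ∀ ξ : H, y (R ξ) = R (y ξ) := by
    intro ξ
    set h : D.domain := ⟨R ξ, hRmem ξ⟩ with hh
    have h2 : (D h : H) + Complex.I • (h : H) = ξ := by rw [← auxT_apply]; exact hRspec ξ
    have h1 : auxT D Complex.I ⟨y (h : H), hy h⟩ = y ξ := by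
      rw [auxT_apply]
      show (D ⟨y (h : H), hy h⟩ : H) + Complex.I • y (h : H) = y ξ
      rw [hyD h, ← map_smul, ← map_add, h2]
    have h4 := hRdom ⟨y (h : H), hy h⟩
    rw [h1] at h4
    exact h4.symm
  -- commutator relation with R
  have hxR : ∀ ξ : H, x (R ξ) = y (R (R ξ)) + R (x ξ) := by
    intro ξ
    set h : D.domain := ⟨R ξ, hRmem ξ⟩ with hh
    have h2 : (D h : H) + Complex.I • (h : H) = ξ := by rw [← auxT_apply]; exact hRspec ξ
    have h1 : auxT D Complex.I ⟨x (h : H), hxdom h⟩ = y (R ξ) + x ξ := by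
      rw [auxT_apply]
      show (D ⟨x (h : H), hxdom h⟩ : H) + Complex.I • x (h : H) = y (R ξ) + x ξ
      rw [hxD h]
      have h3 : x (D h) + Complex.I • x (h : H) = x ξ := by
        rw [← map_smul, ← map_add, h2]
      rw [add_assoc, h3]
    calc x (R ξ) = R (auxT D Complex.I ⟨x (h : H), hxdom h⟩) :=
          (hRdom ⟨x (h : H), hxdom h⟩).symm
      _ = R (y (R ξ) + x ξ) := by rw [h1]
      _ = R (y (R ξ)) + R (x ξ) := map_add R _ _
      _ = y (R (R ξ)) + R (x ξ) := by rw [← hyR]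
  -- the Cayley-type isometry U = 1 - 2iR
  set U : H →L[ℂ] H := 1 - (2 * Complex.I) • R with hU
  have hUapp : ∀ ξ : H, U ξ = ξ - (2 * Complex.I) • R ξ := fun ξ => rfl
  have hUiso : ∀ ξ : H, ‖U ξ‖ = ‖ξ‖ := by
    intro ξ
    set h : D.domain := ⟨R ξ, hRmem ξ⟩ with hh
    have h2 : (D h : H) + Complex.I • (h : H) = ξ := by rw [← auxT_apply]; exact hRspec ξ
    have h3 : U ξ = auxT D (-Complex.I) h := by
      rw [hUapp, auxT_apply, show R ξ = (h : H) from rfl, ← h2]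
      module
    have n1 := aux_normsq D hdense hsa Complex.I Complex.I_re h
    have n2 := aux_normsq D hdense hsa (-Complex.I) (by simp) h
    have e : ‖U ξ‖ ^ 2 = ‖ξ‖ ^ 2 := by
      rw [h3, n2, show ξ = auxT D Complex.I ⟨R ξ, hRmem ξ⟩ from (hRspec ξ).symm, ← hh, n1]
      simp
    have := congrArg Real.sqrt e
    rwa [Real.sqrt_sq (norm_nonneg _), Real.sqrt_sq (norm_nonneg _)] at this
  have hUniso : ∀ (n : ℕ) (ξ : H), ‖(U ^ n) ξ‖ = ‖ξ‖ := by
    intro n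
    induction n with
    | zero => intro ξ; simp
    | succ n ih =>
      intro ξ
      rw [pow_succ, ContinuousLinearMap.mul_apply, ih, hUiso]
  -- operator algebra
  have hyRc : y * R = R * y := ContinuousLinearMap.ext fun ξ => by
    rw [ContinuousLinearMap.mul_apply, ContinuousLinearMap.mul_apply]; exact hyR ξ
  set z : H →L[ℂ] H := y * (R * R) with hz
  set c : H →L[ℂ] H := x * U - U * x with hc
  have hpoint : ∀ ξ : H, c ξ = (-(2 * Complex.I)) • (y (R (R ξ))) := by
    intro ξ
    have e0 : c ξ = x (U ξ) - U (x ξ) := by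
      rw [hc]
      simp [ContinuousLinearMap.sub_apply, ContinuousLinearMap.mul_apply]
    have e1 : x (U ξ) = x ξ - (2 * Complex.I) • x (R ξ) := by rw [hUapp, map_sub, map_smul]
    have e2 : U (x ξ) = x ξ - (2 * Complex.I) • R (x ξ) := hUapp _
    rw [e0, e1, e2, hxR ξ]
    module
  have hcz : c = (-(2 * Complex.I)) • z := ContinuousLinearMap.ext fun ξ => by
    rw [hpoint ξ]
    simp [hz, ContinuousLinearMap.smul_apply, ContinuousLinearMap.mul_apply]
  have hRz : R * z = z * R := by
    simp only [hz, ← mul_assoc]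
    rw [hyRc]
  have hUz : U * z = z * U := by
    rw [hU]
    simp only [sub_mul, mul_sub, one_mul, mul_one, smul_mul_assoc, mul_smul_comm, hRz]
  have hUc : U * c = c * U := by
    rw [hcz]
    simp only [smul_mul_assoc, mul_smul_comm, hUz]
  -- the power trick
  have hpow : ∀ n : ℕ, x * U ^ (n + 1) - U ^ (n + 1) * x = ((n : ℂ) + 1) • (U ^ n * c) := by
    intro n
    induction n with
    | zero => simp [hc]
    | succ n ih =>
      have ih' : x * U ^ (n + 1) = U ^ (n + 1) * x + ((n : ℂ) + 1) • (U ^ n * c) := by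
        rw [← ih]; abel
      have key : x * U ^ (n + 2) = U ^ (n + 2) * x + ((n : ℂ) + 2) • (U ^ (n + 1) * c) := by
        calc x * U ^ (n + 2) = (x * U ^ (n + 1)) * U := by rw [pow_succ, mul_assoc]
          _ = (U ^ (n + 1) * x + ((n : ℂ) + 1) • (U ^ n * c)) * U := by rw [ih']
          _ = U ^ (n + 1) * (x * U) + ((n : ℂ) + 1) • (U ^ n * (c * U)) := by
              simp only [add_mul, smul_mul_assoc, mul_assoc]
          _ = U ^ (n + 1) * (U * x + c) + ((n : ℂ) + 1) • (U ^ n * (U * c)) := by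
              rw [hUc]
              have : x * U = U * x + c := by rw [hc]; abel
              rw [this]
          _ = U ^ (n + 2) * x + ((n : ℂ) + 2) • (U ^ (n + 1) * c) := by
              rw [mul_add, ← mul_assoc, ← pow_succ, ← mul_assoc, ← pow_succ]
              have hsc : ((n : ℂ) + 2) • (U ^ (n + 1) * c)
                  = U ^ (n + 1) * c + ((n : ℂ) + 1) • (U ^ (n + 1) * c) := by
                rw [show ((n : ℂ) + 2) = 1 + ((n : ℂ) + 1) by ring, add_smul, one_smul]
              rw [hsc, add_assoc]
      rw [key]
      push_cast
      rw [show ((n : ℂ) + 1 + 1) = ((n : ℂ) + 2) by ring]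
      abel
  have hbound : ∀ (n : ℕ) (ξ : H), ((n : ℝ) + 1) * ‖c ξ‖ ≤ 2 * ‖x‖ * ‖ξ‖ := by
    intro n ξ
    have h1 := congrArg (fun (T : H →L[ℂ] H) => T ξ) (hpow n)
    simp only [ContinuousLinearMap.sub_apply, ContinuousLinearMap.smul_apply,
      ContinuousLinearMap.mul_apply] at h1
    have a1 : ‖x ((U ^ (n + 1)) ξ)‖ ≤ ‖x‖ * ‖ξ‖ := by
      have := x.le_opNorm ((U ^ (n + 1)) ξ)
      rwa [hUniso] at this
    have a2 : ‖(U ^ (n + 1)) (x ξ)‖ ≤ ‖x‖ * ‖ξ‖ := by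
      rw [hUniso]; exact x.le_opNorm ξ
    have h2 : ‖((n : ℂ) + 1) • (U ^ n) (c ξ)‖ ≤ 2 * ‖x‖ * ‖ξ‖ := by
      rw [← h1]
      calc ‖x ((U ^ (n + 1)) ξ) - (U ^ (n + 1)) (x ξ)‖
          ≤ ‖x ((U ^ (n + 1)) ξ)‖ + ‖(U ^ (n + 1)) (x ξ)‖ := norm_sub_le _ _
        _ ≤ 2 * ‖x‖ * ‖ξ‖ := by linarith
    rw [norm_smul, hUniso] at h2
    have h3 : ‖((n : ℂ) + 1)‖ = (n : ℝ) + 1 := by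
      rw [show ((n : ℂ) + 1) = (((n : ℝ) + 1 : ℝ) : ℂ) by push_cast; ring,
        Complex.norm_real, Real.norm_eq_abs, abs_of_nonneg (by positivity)]
    rwa [h3] at h2
  have hczero : ∀ ξ : H, c ξ = 0 := by
    intro ξ
    by_contra hne
    have hposc : 0 < ‖c ξ‖ := norm_pos_iff.mpr hne
    obtain ⟨n, hn⟩ := exists_nat_gt ((2 * ‖x‖ * ‖ξ‖) / ‖c ξ‖)
    have hb1 := hbound n ξ
    have h4 : (n : ℝ) + 1 ≤ (2 * ‖x‖ * ‖ξ‖) / ‖c ξ‖ := by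
      rw [le_div_iff₀ hposc]; linarith
    linarith
  have hzzero : ∀ ξ : H, y (R (R ξ)) = 0 := by
    intro ξ
    have hp := hpoint ξ
    rw [hczero ξ] at hp
    rcases smul_eq_zero.mp hp.symm with hcase | hcase
    · exfalso
      have : (2 : ℂ) * Complex.I ≠ 0 := by
        simp [Complex.I_ne_zero]
      exact this (by linear_combination -hcase)
    · exact hcase
  have hyRzero : ∀ h : H, h ∈ (D.domain : Set H) → y (R h) = 0 := by
    intro h hh
    have e : R (auxT D Complex.I ⟨h, hh⟩) = h := hRdom ⟨h, hh⟩
    rw [← e]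
    exact hzzero _
  have hyRall : (fun ξ : H => y (R ξ)) = fun _ : H => (0 : H) :=
    Continuous.ext_on hdense (y.continuous.comp R.continuous) continuous_const hyRzero
  have hyzero : ∀ h : H, h ∈ (D.domain : Set H) → y h = (0 : H →L[ℂ] H) h := by
    intro h hh
    have e : R (auxT D Complex.I ⟨h, hh⟩) = h := hRdom ⟨h, hh⟩
    rw [← e]
    simpa using congrFun hyRall (auxT D Complex.I ⟨h, hh⟩)
  have hfun : ⇑y = ⇑(0 : H →L[ℂ] H) :=
    Continuous.ext_on hdense y.continuous (ContinuousLinearMap.continuous _) hyzero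
  ext ξ
  exact congrFun hfun ξ
end

section
/- Let D be the self-adjoint operator on ℓ²(ℤ) given by (D f)(j) = j·f(j) with domain dom D = {f ∈ ℓ²(ℤ) : Σ_{j∈ℤ} j²·|f(j)|² < ∞}, and let ε_j denote the standard orthonormal basis vectors of ℓ²(ℤ). Let n ≥ 1, let x be a bounded operator on ℓ²(ℤ), and let y : ℕ → B(ℓ²(ℤ)) satisfy y 0 = x and, for every k < n: y k maps dom D into dom D and y (k+1) h = i·(D(y k h) − y k (D h)) for all h ∈ dom D (so x is n-times weakly D-differentiable with (δ^D_w)^k(x) = y k). If y n = 0, then x is a diagonal operator: there exists a bounded function g : ℤ → ℂ such that x ε_j = g(j)·ε_j for every j ∈ ℤ. That is, ker (δ^D_w)^n = diag(ℓ^∞(ℤ)). -/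
/-!
Evaluating the commutator relation at the basis vector `ε_j` shows that the `(i, j)` matrix
entry of `y k` is `(I * (i - j))^k` times that of `x`. Hence `y n = 0` kills every off-diagonal
entry of `x`, while its diagonal entries are bounded by `‖x‖`.
-/

open scoped InnerProductSpace

noncomputable section

/-- The domain of the diagonal operator `D` on `ℓ²(ℤ)`: the sequences `f ∈ ℓ²(ℤ)` with
`Σ_{j ∈ ℤ} j² |f j|² < ∞`. -/
def diagDomain : Submodule ℂ (lp (fun _ : ℤ => ℂ) 2) where
  carrier := {f | Memℓp (fun j : ℤ => (j : ℂ) * f j) 2}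
  zero_mem' := by
    show Memℓp (fun j : ℤ => (j : ℂ) * (0 : lp (fun _ : ℤ => ℂ) 2) j) 2
    convert (zero_memℓp : Memℓp (0 : ∀ _ : ℤ, ℂ) 2) using 1
    funext j
    simp
  add_mem' := by
    intro f g hf hg
    show Memℓp (fun j : ℤ => (j : ℂ) * (f + g) j) 2
    have h : (fun j : ℤ => (j : ℂ) * (f + g) j)
        = (fun j : ℤ => (j : ℂ) * f j) + fun j : ℤ => (j : ℂ) * g j := by
      funext j
      simp [lp.coeFn_add, mul_add]
    rw [h]
    exact hf.add hg
  smul_mem' := by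
    intro c f hf
    show Memℓp (fun j : ℤ => (j : ℂ) * (c • f) j) 2
    have h : (fun j : ℤ => (j : ℂ) * (c • f) j)
        = fun j : ℤ => c * ((j : ℂ) * f j) := by
      funext j
      simp [lp.coeFn_smul, Pi.smul_apply, smul_eq_mul]
      ring
    rw [h]
    exact hf.const_mul c

/-- The self-adjoint diagonal operator `(D f) j = j • f j` on `ℓ²(ℤ)`, as a densely defined
unbounded operator (`LinearPMap`) with domain `{f : Σ j² |f j|² < ∞}`. -/
def diagOp : lp (fun _ : ℤ => ℂ) 2 →ₗ.[ℂ] lp (fun _ : ℤ => ℂ) 2 where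
  domain := diagDomain
  toFun :=
    { toFun := fun f => (⟨fun j : ℤ => (j : ℂ) * (f : lp (fun _ : ℤ => ℂ) 2) j, f.2⟩ :
        lp (fun _ : ℤ => ℂ) 2)
      map_add' := by
        intro f g
        ext j
        simp [lp.coeFn_add, mul_add]
        rfl
      map_smul' := by
        intro c f
        ext j
        simp [lp.coeFn_smul, Pi.smul_apply, smul_eq_mul]
        ring }

end

local notation "ℓ²" => lp (fun _ : ℤ => ℂ) 2

theorem lp.eq_single_of_apply_ne {α : Type*} {E : α → Type*} [∀ i, NormedAddCommGroup (E i)]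
    [DecidableEq α] {p : ENNReal} {f : lp E p} {j : α} (hf : ∀ i, i ≠ j → f i = 0) :
    f = lp.single p j (f j) := by
  ext i
  rcases eq_or_ne i j with rfl | hij
  · rw [lp.single_apply_self]
  · rw [hf i hij, lp.single_apply_ne p j _ hij]

theorem norm_apply_single_apply_le (x : ℓ² →L[ℂ] ℓ²) (i j : ℤ) :
    ‖x (lp.single 2 j 1) i‖ ≤ ‖x‖ :=
  calc ‖x (lp.single 2 j 1) i‖ ≤ ‖x (lp.single 2 j 1)‖ := lp.norm_apply_le_norm two_ne_zero _ i
    _ ≤ ‖x‖ * ‖(lp.single 2 j 1 : ℓ²)‖ := x.le_opNorm _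
    _ = ‖x‖ := by rw [lp.norm_single (by norm_num), norm_one, mul_one]

theorem diagOp_mk_apply {f : ℓ²} (hf : f ∈ diagOp.domain) (i : ℤ) :
    diagOp ⟨f, hf⟩ i = i * f i := rfl

theorem single_mem_diagDomain (j : ℤ) : (lp.single 2 j 1 : ℓ²) ∈ diagOp.domain := by
  have h : (fun i : ℤ => (i : ℂ) * (lp.single 2 j 1 : ℓ²) i)
      = ⇑((j : ℂ) • (lp.single 2 j 1 : ℓ²)) := by
    ext i
    rcases eq_or_ne i j with rfl | hij <;> simp [*]
  show Memℓp (fun i : ℤ => (i : ℂ) * (lp.single 2 j 1 : ℓ²) i) 2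
  rw [h]
  exact lp.memℓp _

theorem diagOp_single (j : ℤ) :
    diagOp ⟨lp.single 2 j 1, single_mem_diagDomain j⟩ = (j : ℂ) • (lp.single 2 j 1 : ℓ²) := by
  ext i
  rw [diagOp_mk_apply]
  rcases eq_or_ne i j with rfl | hij <;> simp [*]

theorem commutator_apply_single {y z : ℓ² →L[ℂ] ℓ²} {j : ℤ}
    (hy : y (lp.single 2 j 1) ∈ diagOp.domain)
    (hz : z (lp.single 2 j 1) = Complex.I • (diagOp ⟨y (lp.single 2 j 1), hy⟩
      - y (diagOp ⟨lp.single 2 j 1, single_mem_diagDomain j⟩))) (i : ℤ) :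
    z (lp.single 2 j 1) i = Complex.I * (i - j) * y (lp.single 2 j 1) i := by
  rw [hz, diagOp_single, map_smul, lp.coeFn_smul, Pi.smul_apply, lp.coeFn_sub, Pi.sub_apply,
    diagOp_mk_apply, lp.coeFn_smul, Pi.smul_apply, smul_eq_mul, smul_eq_mul]
  ring

theorem iterate_commutator_apply_single {n : ℕ} {y : ℕ → ℓ² →L[ℂ] ℓ²}
    (hmap : ∀ k, k < n → ∀ h : diagOp.domain, y k h ∈ diagOp.domain)
    (hder : ∀ k (hk : k < n) (h : diagOp.domain),
      y (k + 1) (h : ℓ²) = Complex.I • (diagOp ⟨y k h, hmap k hk h⟩ - y k (diagOp h)))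
    {k : ℕ} (hk : k ≤ n) (i j : ℤ) :
    y k (lp.single 2 j 1) i = (Complex.I * (i - j)) ^ k * y 0 (lp.single 2 j 1) i := by
  induction k with
  | zero => rw [pow_zero, one_mul]
  | succ k ih =>
    rw [commutator_apply_single _ (hder k hk ⟨_, single_mem_diagDomain j⟩),
      ih (Nat.le_of_succ_le hk), pow_succ]
    ring

theorem ker_iter_diag_eq_diagonal_general (n : ℕ)
    (x : lp (fun _ : ℤ => ℂ) 2 →L[ℂ] lp (fun _ : ℤ => ℂ) 2)
    (y : ℕ → (lp (fun _ : ℤ => ℂ) 2 →L[ℂ] lp (fun _ : ℤ => ℂ) 2))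
    (hy0 : y 0 = x)
    (hmap : ∀ k, k < n → ∀ h : diagOp.domain, y k h ∈ diagOp.domain)
    (hder : ∀ k (hk : k < n) (h : diagOp.domain),
      y (k + 1) ((h : lp (fun _ : ℤ => ℂ) 2))
        = Complex.I • (diagOp ⟨y k h, hmap k hk h⟩ - y k (diagOp h)))
    (hker : y n = 0) :
    ∃ g : ℤ → ℂ, (∃ C : ℝ, ∀ j, ‖g j‖ ≤ C) ∧
      ∀ j : ℤ, x (lp.single 2 j 1) = g j • lp.single 2 j 1 := by
  refine ⟨fun j => x (lp.single 2 j 1) j, ⟨‖x‖, fun j => norm_apply_single_apply_le x j j⟩,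
    fun j => ?_⟩
  have off_diag : ∀ i, i ≠ j → x (lp.single 2 j 1) i = 0 := fun i hij => by
    have h := iterate_commutator_apply_single hmap hder le_rfl i j
    rw [hker, hy0, zero_apply, lp.coeFn_zero, Pi.zero_apply] at h
    refine (mul_eq_zero.mp h.symm).resolve_left (pow_ne_zero _ (mul_ne_zero Complex.I_ne_zero ?_))
    exact sub_ne_zero.mpr (Int.cast_injective.ne hij)
  rw [lp.eq_single_of_apply_ne off_diag, ← lp.single_smul, smul_eq_mul, mul_one]

/-- **Example 2.9(d) of the paper.** Let `D` be the diagonal operator `(D f) j = j • f j` on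
`ℓ²(ℤ)`.  If `x` is `n`-times weakly `D`-differentiable (`n ≥ 1`) with iterated weak
derivatives `y k = (δ^D_w)^k(x)` and `(δ^D_w)^n(x) = 0`, then `x` is a diagonal operator:
there is a bounded `g : ℤ → ℂ` with `x ε_j = g j • ε_j` for every standard basis vector
`ε_j`.  That is, `ker (δ^D_w)^n = diag(ℓ^∞(ℤ))`. -/
theorem ker_iter_diag_eq_diagonal (n : ℕ) (hn : 1 ≤ n)
    (x : lp (fun _ : ℤ => ℂ) 2 →L[ℂ] lp (fun _ : ℤ => ℂ) 2)
    (y : ℕ → (lp (fun _ : ℤ => ℂ) 2 →L[ℂ] lp (fun _ : ℤ => ℂ) 2))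
    (hy0 : y 0 = x)
    (hmap : ∀ k, k < n → ∀ h : diagOp.domain, y k h ∈ diagOp.domain)
    (hder : ∀ k (hk : k < n) (h : diagOp.domain),
      y (k + 1) ((h : lp (fun _ : ℤ => ℂ) 2))
        = Complex.I • (diagOp ⟨y k h, hmap k hk h⟩ - y k (diagOp h)))
    (hker : y n = 0) :
    ∃ g : ℤ → ℂ, (∃ C : ℝ, ∀ j, ‖g j‖ ≤ C) ∧
      ∀ j : ℤ, x (lp.single 2 j 1) = g j • lp.single 2 j 1 :=
  ker_iter_diag_eq_diagonal_general n x y hy0 hmap hder hker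
end

section
/- Let H be a nontrivial complex Hilbert space, let A be a densely defined self-adjoint operator on H, and let B be a bounded self-adjoint operator defined on all of H. Then A and B cannot satisfy the Heisenberg Commutation Relation on a core for A: there is no submodule K of H contained in dom A that is a core for A (the closure of the restriction of A to K equals A) such that for every k ∈ K, B k ∈ dom A and A(B k) − B(A k) = i·k. -/
/-!
Since `A` is closed, the relation `[A, B] = i` passes from the core to all of `dom A`. For the
resolvent `R = (A - i)⁻¹` it becomes `[B, R] = i R²`, hence `[B, Rⁿ] = n i Rⁿ⁺¹`. The adjoint of
`R` is `(A + i)⁻¹`, which commutes with `R` by the resolvent identity, so `R` is normal and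
`‖Rⁿ‖ = ‖R‖ⁿ`. Then `n ‖R‖ⁿ⁺¹ ≤ 2 ‖B‖ ‖R‖ⁿ` for every `n`, forcing `R = 0`, which is absurd on
a nontrivial space.
-/

open Set ComplexConjugate LinearPMap
open scoped InnerProductSpace

theorem lie_pow_eq_of_lie_eq_smul_sq {𝕜 α : Type*} [CommRing 𝕜] [Ring α] [Algebra 𝕜 α]
    {a b : α} {c : 𝕜} (h : ⁅a, b⁆ = c • b ^ 2) (n : ℕ) : ⁅a, b ^ n⁆ = (n * c) • b ^ (n + 1) := by
  rw [Ring.lie_def] at h ⊢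
  induction n with
  | zero => simp
  | succ n ih =>
    calc a * b ^ (n + 1) - b ^ (n + 1) * a
        = (a * b ^ n - b ^ n * a) * b + b ^ n * (a * b - b * a) := by noncomm_ring
      _ = ((n + 1 : ℕ) * c) • b ^ (n + 1 + 1) := by
        rw [ih, h, smul_mul_assoc, mul_smul_comm, ← pow_succ, ← pow_add, ← add_smul]
        push_cast
        ring_nf

section CStarAlgebra

variable {A : Type*} [CStarAlgebra A]

theorem IsStarNormal.norm_pow_succ (a : A) [IsStarNormal a] (n : ℕ) :
    ‖a ^ (n + 1)‖ = ‖a‖ ^ (n + 1) := by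
  refine le_antisymm (norm_pow_le' a n.succ_pos) ?_
  nontriviality A
  have h := spectrum.spectralRadius_le_pow_nnnorm_pow_one_div ℂ a n
  rw [IsStarNormal.spectralRadius_eq_nnnorm, nnnorm_one, ENNReal.coe_one, ENNReal.one_rpow,
    mul_one, one_div, ENNReal.le_rpow_inv_iff (by positivity)] at h
  exact_mod_cast h

theorem IsStarNormal.eq_zero_of_lie_eq_smul_sq {a b : A} [IsStarNormal b] {c : ℂ} (hc : c ≠ 0)
    (h : ⁅a, b⁆ = c • b ^ 2) : b = 0 := by
  by_contra hb
  have hpos : 0 < ‖b‖ := norm_pos_iff.2 hb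
  have hbound (n : ℕ) : (n + 1) * ‖c‖ * ‖b‖ ≤ 2 * ‖a‖ := by
    have key : (n + 1) * ‖c‖ * ‖b‖ * ‖b‖ ^ (n + 1) ≤ 2 * ‖a‖ * ‖b‖ ^ (n + 1) :=
      calc (n + 1) * ‖c‖ * ‖b‖ * ‖b‖ ^ (n + 1) = ‖⁅a, b ^ (n + 1)⁆‖ := by
            rw [lie_pow_eq_of_lie_eq_smul_sq h, norm_smul, norm_mul, Complex.norm_natCast,
              IsStarNormal.norm_pow_succ]
            push_cast
            ring
        _ ≤ ‖a‖ * ‖b ^ (n + 1)‖ + ‖b ^ (n + 1)‖ * ‖a‖ := by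
            rw [Ring.lie_def]
            exact (norm_sub_le _ _).trans (add_le_add (norm_mul_le _ _) (norm_mul_le _ _))
        _ = 2 * ‖a‖ * ‖b‖ ^ (n + 1) := by
            rw [IsStarNormal.norm_pow_succ]
            ring
    exact le_of_mul_le_mul_right key (by positivity)
  obtain ⟨n, hn⟩ := exists_nat_gt (2 * ‖a‖ / (‖c‖ * ‖b‖))
  rw [div_lt_iff₀ (by positivity)] at hn
  nlinarith [hbound n, norm_nonneg c, norm_nonneg b]

end CStarAlgebra

namespace LinearPMap

section Core

variable {𝕜 E F : Type*} [NormedField 𝕜] [NormedAddCommGroup E] [NormedSpace 𝕜 E]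
  [NormedAddCommGroup F] [NormedSpace 𝕜 F]

theorem mapsTo_graph_of_closure_eq {f g : E →ₗ.[𝕜] F} (hf : f.IsClosable) (hfg : f.closure = g)
    {Φ : E × F → E × F} (hΦ : Continuous Φ) (h : MapsTo Φ f.graph g.graph) :
    MapsTo Φ g.graph g.graph := by
  subst hfg
  have h' := h.closure_left hΦ hf.closure_isClosed
  rwa [← Submodule.topologicalClosure_coe, hf.graph_closure_eq_closure_graph] at h'

theorem commutator_eq_smul_of_core {A : E →ₗ.[𝕜] E} (hA : A.IsClosed) {K : Submodule 𝕜 E}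
    (hKA : K ≤ A.domain) (hcore : (A.domRestrict K).closure = A) (B : E →L[𝕜] E) (c : 𝕜)
    (hrel : ∀ (k : E) (hk : k ∈ K), ∃ hm : B k ∈ A.domain, A ⟨B k, hm⟩ - B (A ⟨k, hKA hk⟩) = c • k)
    (x : A.domain) : ∃ hm : B x ∈ A.domain, A ⟨B x, hm⟩ - B (A x) = c • (x : E) := by
  -- on the graph of `A`, the relation reads `Φ (x, A x) = (B x, A (B x))`
  let Φ : E × E →L[𝕜] E × E :=
    (B.comp (.fst 𝕜 E E)).prod (B.comp (.snd 𝕜 E E) + c • .fst 𝕜 E E)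
  have hΦ : MapsTo Φ A.graph A.graph := by
    refine mapsTo_graph_of_closure_eq (hA.isClosable.leIsClosable domRestrict_le) hcore
      Φ.continuous fun p hp => ?_
    obtain ⟨k, rfl⟩ := (mem_graph_iff' _).1 hp
    obtain ⟨hm, hk⟩ := hrel k k.2.1
    have hAk : A.domRestrict K k = A ⟨k, hKA k.2.1⟩ := domRestrict_apply rfl
    refine (mem_graph_iff _).2 ⟨⟨B k, hm⟩, rfl, ?_⟩
    simp [Φ, hAk, ← hk]
  obtain ⟨⟨y, hy⟩, rfl, hAy⟩ := (mem_graph_iff _).1 (hΦ (A.mem_graph x))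
  exact ⟨hy, sub_eq_of_eq_add' hAy⟩

end Core

variable {H : Type*} [NormedAddCommGroup H] [InnerProductSpace ℂ H]

structure IsResolvent (A : H →ₗ.[ℂ] H) (z : ℂ) (R : H →L[ℂ] H) : Prop where
  mem_domain : ∀ y, R y ∈ A.domain
  right_inv : ∀ y, A ⟨R y, mem_domain y⟩ - z • R y = y
  left_inv : ∀ x : A.domain, R (A x - z • (x : H)) = x

namespace IsResolvent

variable {A : H →ₗ.[ℂ] H} {z w : ℂ} {R S : H →L[ℂ] H}

theorem sub_eq_smul_mul (hR : A.IsResolvent z R) (hS : A.IsResolvent w S) :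
    R - S = (z - w) • (R * S) := by
  ext y
  have hSy : A ⟨S y, hS.mem_domain y⟩ - w • S y
      = (A ⟨S y, hS.mem_domain y⟩ - z • S y) + (z - w) • S y := by module
  calc R y - S y = R (A ⟨S y, hS.mem_domain y⟩ - w • S y) - S y := by rw [hS.right_inv]
    _ = (z - w) • R (S y) := by
      rw [hSy, _root_.map_add, hR.left_inv ⟨S y, _⟩, _root_.map_smul, add_sub_cancel_left]

theorem commute (hR : A.IsResolvent z R) (hS : A.IsResolvent w S) (hzw : z ≠ w) :
    Commute R S := by
  have h : (z - w) • (R * S) = (z - w) • (S * R) := by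
    rw [← hR.sub_eq_smul_mul hS, ← neg_sub S R, hS.sub_eq_smul_mul hR, ← neg_smul, neg_sub]
  exact smul_right_injective _ (sub_ne_zero.2 hzw) h

theorem ne_zero [Nontrivial H] (hR : A.IsResolvent z R) : R ≠ 0 := by
  rintro rfl
  obtain ⟨y, hy⟩ := exists_ne (0 : H)
  have h := hR.right_inv y
  simp only [_root_.zero_apply, smul_zero, sub_zero] at h
  exact hy (h ▸ A.map_zero)

theorem lie_eq_smul_sq {B : H →L[ℂ] H} {c : ℂ}
    (hB : ∀ x : A.domain, ∃ hm : B x ∈ A.domain, A ⟨B x, hm⟩ - B (A x) = c • (x : H))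
    (hR : A.IsResolvent z R) : ⁅B, R⁆ = c • R ^ 2 := by
  rw [Ring.lie_def]
  ext y
  obtain ⟨hm, hBA⟩ := hB ⟨R y, hR.mem_domain y⟩
  have h : A ⟨B (R y), hm⟩ - z • B (R y) = c • R y + B y :=
    calc A ⟨B (R y), hm⟩ - z • B (R y)
        = (A ⟨B (R y), hm⟩ - B (A ⟨R y, _⟩)) + B (A ⟨R y, hR.mem_domain y⟩ - z • R y) := by
          rw [_root_.map_sub, _root_.map_smul]
          abel
      _ = c • R y + B y := by rw [hBA, hR.right_inv]
  calc (B * R - R * B) y = R (A ⟨B (R y), hm⟩ - z • B (R y)) - R (B y) := by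
        rw [hR.left_inv ⟨B (R y), hm⟩]
        rfl
    _ = (c • R ^ 2) y := by
        rw [h, _root_.map_add, _root_.map_smul]
        simp [pow_two]

end IsResolvent

end LinearPMap

section SelfAdjoint

variable {H : Type*} [NormedAddCommGroup H] [InnerProductSpace ℂ H] [CompleteSpace H]
  {A : H →ₗ.[ℂ] H}

namespace IsSelfAdjoint

theorem isFormalAdjoint_s12 (hA : IsSelfAdjoint A) : A.IsFormalAdjoint A := by
  have h := adjoint_isFormalAdjoint hA.dense_domain
  rwa [isSelfAdjoint_def.mp hA] at h

theorem im_inner_self_apply (hA : IsSelfAdjoint A) (x : A.domain) : (⟪(x : H), A x⟫_ℂ).im = 0 := by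
  rw [← Complex.conj_eq_iff_im, inner_conj_symm]
  exact hA.isFormalAdjoint_s12 x x

theorem abs_im_mul_norm_le (hA : IsSelfAdjoint A) (z : ℂ) (x : A.domain) :
    |z.im| * ‖(x : H)‖ ≤ ‖A x - z • (x : H)‖ := by
  rcases eq_or_ne ‖(x : H)‖ 0 with hx | hx
  · simp [hx]
  have him : (⟪(x : H), A x - z • (x : H)⟫_ℂ).im = -(z.im * ‖(x : H)‖ ^ 2) := by
    rw [inner_sub_right, inner_smul_right, inner_self_eq_norm_sq_to_K, Complex.sub_im,
      hA.im_inner_self_apply]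
    simp [← Complex.ofReal_pow]
  refine le_of_mul_le_mul_right ?_ (lt_of_le_of_ne (norm_nonneg _) hx.symm)
  calc |z.im| * ‖(x : H)‖ * ‖(x : H)‖ = |(⟪(x : H), A x - z • (x : H)⟫_ℂ).im| := by
        rw [him, abs_neg, abs_mul, abs_of_nonneg (sq_nonneg ‖(x : H)‖)]
        ring
    _ ≤ ‖(x : H)‖ * ‖A x - z • (x : H)‖ :=
        (Complex.abs_im_le_norm _).trans (norm_inner_le_norm _ _)
    _ = ‖A x - z • (x : H)‖ * ‖(x : H)‖ := mul_comm _ _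

theorem eq_zero_of_apply_eq_smul (hA : IsSelfAdjoint A) {z : ℂ} (hz : z.im ≠ 0) {x : A.domain}
    (hx : A x = z • (x : H)) : (x : H) = 0 := by
  have h := hA.abs_im_mul_norm_le z x
  rw [hx, sub_self, norm_zero] at h
  exact norm_le_zero_iff.1 (nonpos_of_mul_nonpos_right h (abs_pos.2 hz))

theorem norm_prod_apply_le (hA : IsSelfAdjoint A) {z : ℂ} (hz : z.im ≠ 0) (x : A.domain) :
    ‖((x : H), A x)‖ ≤ (1 + (1 + ‖z‖) / |z.im|) * ‖A x - z • (x : H)‖ := by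
  have hx : ‖(x : H)‖ ≤ ‖A x - z • (x : H)‖ / |z.im| := by
    rw [le_div_iff₀ (abs_pos.2 hz), mul_comm]
    exact hA.abs_im_mul_norm_le z x
  have hAx := norm_le_insert' (A x) (z • (x : H))
  rw [norm_smul] at hAx
  have h0 : 0 ≤ ‖A x - z • (x : H)‖ / |z.im| := by positivity
  rw [add_mul, one_mul, div_mul_comm, mul_comm, norm_prod_le_iff]
  constructor <;> nlinarith [norm_nonneg z, norm_nonneg (A x - z • (x : H))]

theorem isClosed_range_sub_smul (hA : IsSelfAdjoint A) {z : ℂ} (hz : z.im ≠ 0) :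
    IsClosed (LinearMap.range (A.toFun - z • A.domain.subtype) : Set H) := by
  have : CompleteSpace A.graph := hA.isClosed.completeSpace_coe
  let L : A.graph →L[ℂ] H :=
    (ContinuousLinearMap.snd ℂ H H - z • ContinuousLinearMap.fst ℂ H H).comp A.graph.subtypeL
  have hrange : range L = LinearMap.range (A.toFun - z • A.domain.subtype) := by
    ext y
    constructor
    · rintro ⟨⟨p, hp⟩, rfl⟩
      obtain ⟨x, rfl⟩ := (mem_graph_iff' A).1 hp
      exact ⟨x, rfl⟩
    · rintro ⟨x, rfl⟩
      exact ⟨⟨_, A.mem_graph x⟩, rfl⟩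
  have hL : AntilipschitzWith ⟨1 + (1 + ‖z‖) / |z.im|, by positivity⟩ L := by
    refine L.antilipschitz_of_bound fun ⟨p, hp⟩ => ?_
    obtain ⟨x, rfl⟩ := (mem_graph_iff' A).1 hp
    exact hA.norm_prod_apply_le hz x
  rw [← hrange]
  exact hL.isClosed_range L.uniformContinuous

theorem orthogonal_range_sub_smul (hA : IsSelfAdjoint A) {z : ℂ} (hz : z.im ≠ 0) :
    (LinearMap.range (A.toFun - z • A.domain.subtype))ᗮ = ⊥ := by
  refine (Submodule.eq_bot_iff _).2 fun y hy => ?_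
  have hy' (x : A.domain) : ⟪conj z • y, (x : H)⟫_ℂ = ⟪y, A x⟫_ℂ := by
    have h := (Submodule.mem_orthogonal' _ y).1 hy _ ⟨x, rfl⟩
    rw [LinearMap.sub_apply, inner_sub_right, sub_eq_zero] at h
    rw [inner_smul_left, Complex.conj_conj]
    exact (h.trans (inner_smul_right _ _ _)).symm
  -- `y` is an eigenvector of `A† = A` with the non-real eigenvalue `conj z`
  have hgraph : (y, conj z • y) ∈ A†.graph :=
    (mem_graph_iff _).2 ⟨⟨y, mem_adjoint_domain_of_exists y ⟨_, hy'⟩⟩, rfl,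
      adjoint_apply_eq hA.dense_domain _ hy'⟩
  rw [isSelfAdjoint_def.mp hA] at hgraph
  obtain ⟨x, rfl, hx⟩ := (mem_graph_iff _).1 hgraph
  exact hA.eq_zero_of_apply_eq_smul (by simpa using hz) hx

theorem exists_isResolvent (hA : IsSelfAdjoint A) {z : ℂ} (hz : z.im ≠ 0) :
    ∃ R : H →L[ℂ] H, A.IsResolvent z R := by
  set T := A.toFun - z • A.domain.subtype
  have hinj : Function.Injective T :=
    (injective_iff_map_eq_zero T).2 fun x hx =>
      Subtype.ext (hA.eq_zero_of_apply_eq_smul hz (sub_eq_zero.1 hx))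
  have hsurj : Function.Surjective T := by
    rw [← LinearMap.range_eq_top,
      ← (hA.isClosed_range_sub_smul hz).submodule_topologicalClosure_eq,
      Submodule.topologicalClosure_eq_top_iff]
    exact hA.orthogonal_range_sub_smul hz
  let e := LinearEquiv.ofBijective T ⟨hinj, hsurj⟩
  have hbound (y : H) : ‖(e.symm y : H)‖ ≤ |z.im|⁻¹ * ‖y‖ := by
    rw [le_inv_mul_iff₀ (abs_pos.2 hz)]
    exact (hA.abs_im_mul_norm_le z (e.symm y)).trans_eq (congrArg norm (e.apply_symm_apply y))
  exact ⟨(A.domain.subtype ∘ₗ e.symm.toLinearMap).mkContinuous _ hbound,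
    fun y => (e.symm y).2, e.apply_symm_apply, fun x => congrArg Subtype.val (e.symm_apply_apply x)⟩

end IsSelfAdjoint

namespace LinearPMap.IsResolvent

variable {z : ℂ} {R S : H →L[ℂ] H}

theorem adjoint_eq (hA : IsSelfAdjoint A) (hR : A.IsResolvent z R)
    (hS : A.IsResolvent (conj z) S) : R.adjoint = S := by
  refine ((ContinuousLinearMap.eq_adjoint_iff S R).2 fun u y => ?_).symm
  have hSu := hS.mem_domain u
  have hRy := hR.mem_domain y
  calc ⟪S u, y⟫_ℂ = ⟪S u, A ⟨R y, hRy⟩ - z • R y⟫_ℂ := by rw [hR.right_inv]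
    _ = ⟪A ⟨S u, hSu⟩ - conj z • S u, R y⟫_ℂ := by
      rw [inner_sub_right, inner_sub_left, inner_smul_right, inner_smul_left, Complex.conj_conj,
        ← hA.isFormalAdjoint_s12 ⟨S u, hSu⟩ ⟨R y, hRy⟩]
    _ = ⟪u, R y⟫_ℂ := by rw [hS.right_inv]

theorem isStarNormal (hA : IsSelfAdjoint A) (hz : z.im ≠ 0) (hR : A.IsResolvent z R) :
    IsStarNormal R := by
  obtain ⟨S, hS⟩ := hA.exists_isResolvent (z := conj z) (by simpa using hz)
  refine ⟨?_⟩
  rw [ContinuousLinearMap.star_eq_adjoint, hR.adjoint_eq hA hS]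
  exact (hR.commute hS fun h => hz (Complex.conj_eq_iff_im.1 h.symm)).symm

end LinearPMap.IsResolvent

end SelfAdjoint

theorem no_bounded_selfadjoint_heisenberg_on_core_general {H : Type*} [NormedAddCommGroup H]
    [InnerProductSpace ℂ H] [CompleteSpace H] [Nontrivial H]
    (A : H →ₗ.[ℂ] H) (hAsa : A.adjoint = A)
    (B : H →L[ℂ] H) :
    ¬ ∃ (K : Submodule ℂ H) (hKA : K ≤ A.domain),
        (A.domRestrict K).closure = A ∧
        ∀ (k : H) (hk : k ∈ K), ∃ hm : B k ∈ A.domain,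
          A ⟨B k, hm⟩ - B (A ⟨k, hKA hk⟩) = Complex.I • k := by
  rintro ⟨K, hKA, hcore, hrel⟩
  have hA : IsSelfAdjoint A := hAsa
  have hB := commutator_eq_smul_of_core hA.isClosed hKA hcore B Complex.I hrel
  obtain ⟨R, hR⟩ := hA.exists_isResolvent (z := Complex.I) (by simp)
  have : IsStarNormal R := hR.isStarNormal hA (by simp)
  exact hR.ne_zero (IsStarNormal.eq_zero_of_lie_eq_smul_sq Complex.I_ne_zero (hR.lie_eq_smul_sq hB))

/-- **No bounded self-adjoint operator satisfies the Heisenberg Commutation Relation with a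
self-adjoint operator on a core.** Let `H` be a nontrivial complex Hilbert space, `A` a densely
defined self-adjoint operator, and `B` an everywhere-defined bounded self-adjoint operator.
Then there is no submodule `K ⊆ dom A` which is a core for `A` (the closure of `A` restricted
to `K` equals `A`) on which `A (B k) - B (A k) = i • k` holds. -/
theorem no_bounded_selfadjoint_heisenberg_on_core {H : Type*} [NormedAddCommGroup H]
    [InnerProductSpace ℂ H] [CompleteSpace H] [Nontrivial H]
    (A : H →ₗ.[ℂ] H) (hAdense : Dense (A.domain : Set H)) (hAsa : A.adjoint = A)
    (B : H →L[ℂ] H) (hBsa : IsSelfAdjoint B) :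
    ¬ ∃ (K : Submodule ℂ H) (hKA : K ≤ A.domain),
        (A.domRestrict K).closure = A ∧
        ∀ (k : H) (hk : k ∈ K), ∃ hm : B k ∈ A.domain,
          A ⟨B k, hm⟩ - B (A ⟨k, hKA hk⟩) = Complex.I • k :=
  no_bounded_selfadjoint_heisenberg_on_core_general A hAsa B
end
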